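/- There is a universal constant c > 0 such that the following holds. Let ℓ ≥ 2, let ε > 0 satisfy ℓ ≤ e^ε, and let p, q be distributions on [ℓ]. Suppose τ > 0 satisfies Σ_{i : q_i > 0 and 1/2 ≤ p_i/q_i ≤ 2} (√q_i − √p_i)² ≥ τ. Then d_h²(RR^{ε,ℓ} p, RR^{ε,ℓ} q) ≥ c · min(1, e^ε·τ/ℓ) · τ. -/

import Mathlib

/-!
Randomized response acts on each coordinate as the affine map `t ↦ (1 + (e^ε - 1) t) / D`,
`D = ℓ - 1 + e^ε`. Since `(√P - √Q)² ≥ (P - Q)² / (2 (P + Q))`, a coordinate with `p_i ≤ 2 q_i`,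
whose input Hellinger term `s_i` is at most `q_i`, keeps an output term of at least a constant times
`s_i · min 1 ((e^ε - 1) s_i)`. Coordinates with `(e^ε - 1) s_i ≥ 1` thus contribute linearly; if
they carry less than half of `τ`, the others contribute `(e^ε - 1) Σ s_i²`, which Cauchy–Schwarz
over at most `ℓ` coordinates bounds below by `(e^ε - 1) τ² / (4ℓ)`.
-/

open scoped Classical ENNReal
open Finset

noncomputable section

/-- `p` is a probability distribution on `Fin k`. -/
def IsDist {k : ℕ} (p : Fin k → ℝ) : Prop :=
  (∀ i, 0 ≤ p i) ∧ ∑ i, p i = 1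

/-- `T` is a channel from `[k]` to `[ℓ]`: nonnegative entries, columns sum to 1. -/
def IsChannel {ℓ k : ℕ} (T : Matrix (Fin ℓ) (Fin k) ℝ) : Prop :=
  (∀ r c, 0 ≤ T r c) ∧ ∀ c, ∑ r, T r c = 1

/-- Squared Hellinger divergence `d_h²(p,q) = Σ_i (√p_i − √q_i)²`. -/
def hellingerSq {k : ℕ} (p q : Fin k → ℝ) : ℝ :=
  ∑ i, (Real.sqrt (p i) - Real.sqrt (q i)) ^ 2

/-- Total variation distance `d_TV(p,q) = (1/2) Σ_i |p_i − q_i|`. -/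
def tvDist {k : ℕ} (p q : Fin k → ℝ) : ℝ :=
  (1 / 2) * ∑ i, |p i - q i|

/-- `T` is an `ε`-LDP channel: `T(r,c) ≤ e^ε T(r,c')` for all rows `r`, columns `c, c'`. -/
def IsLDP {ℓ k : ℕ} (ε : ℝ) (T : Matrix (Fin ℓ) (Fin k) ℝ) : Prop :=
  IsChannel T ∧ ∀ r c c', T r c ≤ Real.exp ε * T r c'

/-- The `ℓ`-ary randomized response channel with privacy parameter `ε`. -/
def RRChannel (ε : ℝ) (ℓ : ℕ) : Matrix (Fin ℓ) (Fin ℓ) ℝ :=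
  fun j i => if j = i then Real.exp ε / ((ℓ : ℝ) - 1 + Real.exp ε)
             else 1 / ((ℓ : ℝ) - 1 + Real.exp ε)

theorem sub_sq_le_two_mul_add_mul_sq_sqrt_sub {x y : ℝ} (hx : 0 ≤ x) (hy : 0 ≤ y) :
    (x - y) ^ 2 ≤ 2 * (x + y) * (√x - √y) ^ 2 := by
  have hfactor : x - y = (√x - √y) * (√x + √y) := by
    linear_combination Real.sq_sqrt hy - Real.sq_sqrt hx
  have hsum : (√x + √y) ^ 2 ≤ 2 * (x + y) := by
    nlinarith [Real.sq_sqrt hx, Real.sq_sqrt hy, sq_nonneg (√x - √y)]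
  rw [hfactor, mul_pow, mul_comm]
  exact mul_le_mul_of_nonneg_right hsum (sq_nonneg _)

theorem mul_sq_sqrt_sub_le_sq_sub {x y : ℝ} (hx : 0 ≤ x) (hy : 0 ≤ y) :
    y * (√y - √x) ^ 2 ≤ (y - x) ^ 2 := by
  have hfactor : y - x = (√y - √x) * (√y + √x) := by
    linear_combination Real.sq_sqrt hx - Real.sq_sqrt hy
  have hy_le : y ≤ (√y + √x) ^ 2 := by
    nlinarith [Real.sq_sqrt hy, Real.sqrt_nonneg x, Real.sqrt_nonneg y]
  rw [hfactor, mul_pow, mul_comm]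
  exact mul_le_mul_of_nonneg_left hy_le (sq_nonneg _)

theorem sq_sqrt_sub_sqrt_le {x y : ℝ} (hx : 0 ≤ x) (hxy : x ≤ 4 * y) : (√y - √x) ^ 2 ≤ y := by
  have hy : 0 ≤ y := by linarith
  have hsqrt : √x ≤ 2 * √y :=
    Real.sqrt_le_iff.2 ⟨by positivity, by rw [mul_pow, Real.sq_sqrt hy]; linarith⟩
  nlinarith [Real.sq_sqrt hy, Real.sqrt_nonneg x, Real.sqrt_nonneg y]

theorem le_sq_sqrt_affine_sub_sqrt_affine {α a x y : ℝ} (hα : 0 < α) (ha : 0 ≤ a)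
    (hx : 0 ≤ x) (hxy : x ≤ 2 * y) :
    a / 10 * ((√y - √x) ^ 2 * min 1 (a / α * (√y - √x) ^ 2)) ≤
      (√(α + a * x) - √(α + a * y)) ^ 2 := by
  have hy : 0 ≤ y := by linarith
  set s := (√y - √x) ^ 2
  set m := min 1 (a / α * s)
  have hs_le : s ≤ y := sq_sqrt_sub_sqrt_le hx (by linarith)
  have hm_nonneg : 0 ≤ m := le_min zero_le_one (by positivity)
  have hm_le : m * (2 * α + a * (x + y)) ≤ 5 * a * y := by
    have h1 : m ≤ 1 := min_le_left _ _
    have h2 : m * α ≤ a * y := by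
      calc m * α ≤ a / α * s * α := mul_le_mul_of_nonneg_right (min_le_right _ _) hα.le
        _ = a * s := by field_simp
        _ ≤ a * y := mul_le_mul_of_nonneg_left hs_le ha
    nlinarith [mul_le_mul_of_nonneg_right h1 (mul_nonneg ha (add_nonneg hx hy))]
  have hhell := sub_sq_le_two_mul_add_mul_sq_sqrt_sub (x := α + a * x) (y := α + a * y)
    (by positivity) (by positivity)
  have hpos : 0 < 2 * (α + a * x + (α + a * y)) := by positivity
  refine le_of_mul_le_mul_left ?_ hpos
  calc 2 * (α + a * x + (α + a * y)) * (a / 10 * (s * m))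
      = a / 5 * s * (m * (2 * α + a * (x + y))) := by ring
    _ ≤ a / 5 * s * (5 * a * y) := by gcongr
    _ = a ^ 2 * (y * s) := by ring
    _ ≤ a ^ 2 * (y - x) ^ 2 := by gcongr; exact mul_sq_sqrt_sub_le_sq_sub hx hy
    _ = (α + a * x - (α + a * y)) ^ 2 := by ring
    _ ≤ _ := hhell

theorem le_sum_mul_min_one {ι : Type*} (s : Finset ι) {f : ι → ℝ} {c τ n : ℝ}
    (hf : ∀ i ∈ s, 0 ≤ f i) (hc : 0 ≤ c) (hτ : 0 ≤ τ) (hn : 0 < n) (hcard : (#s : ℝ) ≤ n)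
    (hτf : τ ≤ ∑ i ∈ s, f i) :
    τ / 4 * min 1 (c * τ / n) ≤ ∑ i ∈ s, f i * min 1 (c * f i) := by
  set big := s.filter (fun i => 1 ≤ c * f i)
  set small := s.filter (fun i => ¬ 1 ≤ c * f i)
  have hsum_big : ∑ i ∈ big, f i * min 1 (c * f i) = ∑ i ∈ big, f i :=
    sum_congr rfl fun i hi => by rw [min_eq_left (mem_filter.1 hi).2, mul_one]
  have hsum_small : ∑ i ∈ small, f i * min 1 (c * f i) = c * ∑ i ∈ small, f i ^ 2 := by
    rw [mul_sum]
    refine sum_congr rfl fun i hi => ?_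
    rw [min_eq_right (not_le.1 (mem_filter.1 hi).2).le]
    ring
  have hsplit := sum_filter_add_sum_filter_not s (fun i => 1 ≤ c * f i) f
  have hsplit_min := sum_filter_add_sum_filter_not s (fun i => 1 ≤ c * f i)
    (fun i => f i * min 1 (c * f i))
  have hterm_nonneg : ∀ t ⊆ s, 0 ≤ ∑ i ∈ t, f i * min 1 (c * f i) := fun t ht =>
    sum_nonneg fun i hi =>
      mul_nonneg (hf i (ht hi)) (le_min zero_le_one (mul_nonneg hc (hf i (ht hi))))
  by_cases hcase : τ / 2 ≤ ∑ i ∈ big, f i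
  · have := hterm_nonneg small (filter_subset _ _)
    nlinarith [min_le_left 1 (c * τ / n)]
  · have hsmall_ge : τ / 2 ≤ ∑ i ∈ small, f i := by linarith
    have hcs : (∑ i ∈ small, f i) ^ 2 ≤ n * ∑ i ∈ small, f i ^ 2 :=
      (sq_sum_le_card_mul_sum_sq).trans (mul_le_mul_of_nonneg_right
        ((Nat.cast_le.2 (card_filter_le _ _)).trans hcard) (sum_nonneg fun i _ => sq_nonneg _))
    have hsq : τ ^ 2 / 4 ≤ n * ∑ i ∈ small, f i ^ 2 := by nlinarith
    have := hterm_nonneg big (filter_subset _ _)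
    calc τ / 4 * min 1 (c * τ / n) ≤ τ / 4 * (c * τ / n) := by gcongr; exact min_le_right _ _
      _ = c * (τ ^ 2 / 4) / n := by ring
      _ ≤ c * (n * ∑ i ∈ small, f i ^ 2) / n := by gcongr
      _ = ∑ i ∈ small, f i * min 1 (c * f i) := by rw [hsum_small]; field_simp
      _ ≤ _ := by linarith

theorem RRChannel_mulVec_apply {ℓ : ℕ} (ε : ℝ) {p : Fin ℓ → ℝ} (hp : ∑ i, p i = 1)
    (i : Fin ℓ) :
    (RRChannel ε ℓ).mulVec p i =
      1 / ((ℓ : ℝ) - 1 + Real.exp ε) + (Real.exp ε - 1) / ((ℓ : ℝ) - 1 + Real.exp ε) * p i := by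
  have hsplit : ∀ j, RRChannel ε ℓ i j * p j =
      1 / ((ℓ : ℝ) - 1 + Real.exp ε) * p j +
        if i = j then (Real.exp ε - 1) / ((ℓ : ℝ) - 1 + Real.exp ε) * p j else 0 := by
    intro j
    by_cases h : i = j <;> simp only [RRChannel, h, if_true, if_false] <;> ring
  simp only [Matrix.mulVec, dotProduct, hsplit, sum_add_distrib, sum_ite_eq, mem_univ, if_true,
    ← mul_sum, hp, mul_one]

theorem le_sq_sqrt_RRChannel_mulVec_sub {ℓ : ℕ} {ε : ℝ} (hε : 0 ≤ ε) {p q : Fin ℓ → ℝ}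
    (hp : IsDist p) (hq : IsDist q) {i : Fin ℓ} (hpq : p i ≤ 2 * q i) :
    (Real.exp ε - 1) / ((ℓ : ℝ) - 1 + Real.exp ε) / 10 * ((√(q i) - √(p i)) ^ 2 *
        min 1 ((Real.exp ε - 1) * (√(q i) - √(p i)) ^ 2)) ≤
      (√((RRChannel ε ℓ).mulVec p i) - √((RRChannel ε ℓ).mulVec q i)) ^ 2 := by
  have hE : 1 ≤ Real.exp ε := Real.one_le_exp hε
  have hℓ : (1 : ℝ) ≤ ℓ := by exact_mod_cast i.pos
  have hD : 0 < (ℓ : ℝ) - 1 + Real.exp ε := by linarith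
  have h := le_sq_sqrt_affine_sub_sqrt_affine (one_div_pos.2 hD)
    (div_nonneg (sub_nonneg.2 hE) hD.le) (hp.1 i) hpq
  rwa [div_div_div_cancel_right₀ hD.ne', div_one, ← RRChannel_mulVec_apply ε hp.2,
    ← RRChannel_mulVec_apply ε hq.2] at h

/-- Randomized response preserves the contribution of comparable elements. -/
theorem stmt6 :
    ∃ c : ℝ, 0 < c ∧
      ∀ (ℓ : ℕ), 2 ≤ ℓ → ∀ ε : ℝ, 0 < ε → (ℓ : ℝ) ≤ Real.exp ε →
        ∀ p q : Fin ℓ → ℝ, IsDist p → IsDist q →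
          ∀ τ : ℝ, 0 < τ →
            τ ≤ ∑ i ∈ Finset.univ.filter
                  (fun i => 0 < q i ∧ 1 / 2 ≤ p i / q i ∧ p i / q i ≤ 2),
                (Real.sqrt (q i) - Real.sqrt (p i)) ^ 2 →
            c * min 1 (Real.exp ε * τ / (ℓ : ℝ)) * τ ≤
              hellingerSq ((RRChannel ε ℓ).mulVec p) ((RRChannel ε ℓ).mulVec q) := by
  refine ⟨1 / 320, by norm_num, ?_⟩
  intro ℓ hℓ ε hε hℓE p q hp hq τ hτ hτS
  set E := Real.exp ε
  set D := (ℓ : ℝ) - 1 + E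
  set S := univ.filter fun i => 0 < q i ∧ 1 / 2 ≤ p i / q i ∧ p i / q i ≤ 2
  have hℓ2 : (2 : ℝ) ≤ ℓ := by exact_mod_cast hℓ
  have hE1 : 0 ≤ E - 1 := by linarith
  have hD : 0 < D := by linarith
  have ha : 1 / 4 ≤ (E - 1) / D := by rw [le_div_iff₀ hD]; linarith
  have hmin : min 1 (E * τ / ℓ) ≤ 2 * min 1 ((E - 1) * τ / ℓ) := by
    rw [mul_min_of_nonneg _ _ zero_le_two]
    refine min_le_min (by norm_num) ?_
    rw [← mul_div_assoc, div_le_div_iff_of_pos_right (by linarith)]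
    nlinarith
  have hm : 0 ≤ min 1 ((E - 1) * τ / ℓ) := le_min zero_le_one (by positivity)
  have hsum := le_sum_mul_min_one S (f := fun i => (√(q i) - √(p i)) ^ 2) (c := E - 1) (n := ℓ)
    (fun i _ => sq_nonneg _) hE1 hτ.le (by linarith)
    ((Nat.cast_le.2 (card_le_univ S)).trans (by simp)) hτS
  calc 1 / 320 * min 1 (E * τ / ℓ) * τ
      ≤ (E - 1) / D / 10 * (τ / 4 * min 1 ((E - 1) * τ / ℓ)) := by
        nlinarith [mul_le_mul_of_nonneg_right hmin hτ.le,
          mul_le_mul_of_nonneg_right ha (mul_nonneg hτ.le hm)]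
    _ ≤ ∑ i ∈ S, (E - 1) / D / 10 * ((√(q i) - √(p i)) ^ 2 *
          min 1 ((E - 1) * (√(q i) - √(p i)) ^ 2)) := by rw [← mul_sum]; gcongr
    _ ≤ ∑ i ∈ S, (√((RRChannel ε ℓ).mulVec p i) - √((RRChannel ε ℓ).mulVec q i)) ^ 2 :=
        sum_le_sum fun i hi => le_sq_sqrt_RRChannel_mulVec_sub hε.le hp hq
          ((div_le_iff₀ (mem_filter.1 hi).2.1).1 (mem_filter.1 hi).2.2.2)
    _ ≤ _ := sum_le_sum_of_subset_of_nonneg (subset_univ S) fun i _ _ => sq_nonneg _
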